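/- For every complex number q with |q| < 1, Z(q) = ∑_{k=1}^∞ ∑_{n=1}^∞ q^{k+n}/((1+q^{2n-1})(1-q^{2k})) + (1/2) X(q) + (1/2) Y(q). -/

import Mathlib

open Complex

noncomputable def Yser (q : ℂ) : ℂ :=
  ∑' n : ℕ, ∑' m : ℕ,
    (-1 : ℂ) ^ (m + 1) * q ^ (2 * (n + 1) * (m + 1) + (m + 1)) /
      ((1 - q ^ (2 * m + 1)) * (1 + q ^ (n + 1)))

noncomputable def Zser (q : ℂ) : ℂ :=
  ∑' k : ℕ, ∑' n : ℕ,
    q ^ (2 * (k + 1) * (n + 1)) / ((1 + q ^ (2 * n + 1)) * (1 - q ^ (2 * k + 1)))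

noncomputable def Xser (q : ℂ) : ℂ :=
  ∑' k : ℕ, ∑' n : ℕ,
    (-1 : ℂ) ^ (k + 1) * q ^ (2 * (k + 1) * (n + 1) + (k + 1)) /
      ((1 - q ^ (n + 1)) * (1 - q ^ (2 * k + 1)))

/-!
Expanding `1 / (1 - q ^ (2k+1))` as a geometric series and summing the resulting double series
in the other order (a Lambert-series swap) turns each column of `Z` into the part `k ≥ n` of the
double series `S` on the right. Averaging `X` with the transpose of `Y` uses
`1 / (1 - u) + 1 / (1 + u) = 2 / (1 - u ^ 2)` and yields a double series whose columns resum in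
the same way to minus the part `k < n` of `S`. Hence `Z = S + (X + Y) / 2`.
-/

section Split
variable {α : Type*} [AddCommGroup α] [UniformSpace α] [IsUniformAddGroup α] [CompleteSpace α]
  [T2Space α]

theorem Summable.tsum_prod_eq_tsum_tsum_le_add_tsum_tsum_lt {f : ℕ × ℕ → α} (hf : Summable f) :
    ∑' p, f p = ∑' n, ∑' j, f (n + j, n) + ∑' k, ∑' j, f (k, k + j + 1) := by
  let lower : ℕ × ℕ → ℕ × ℕ := fun p => (p.1 + p.2, p.1)
  let upper : ℕ × ℕ → ℕ × ℕ := fun p => (p.1, p.1 + p.2 + 1)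
  have lower_inj : lower.Injective := fun p p' h => by
    simp only [lower, Prod.ext_iff] at h ⊢; omega
  have upper_inj : upper.Injective := fun p p' h => by
    simp only [upper, Prod.ext_iff] at h ⊢; omega
  have range_upper : Set.range upper = (Set.range lower)ᶜ := by
    ext ⟨a, b⟩
    simp only [Set.mem_range, Set.mem_compl_iff, not_exists, lower, upper, Prod.ext_iff]
    constructor
    · rintro ⟨p, h₁, h₂⟩ p' h'; omega
    · intro h
      refine ⟨(a, b - a - 1), rfl, ?_⟩
      by_contra hb
      exact h (b, a - b) ⟨by omega, rfl⟩
  have sum_lower : ∑' n, ∑' j, f (n + j, n) = ∑' p, f (lower p) :=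
    (hf.comp_injective lower_inj).tsum_prod.symm
  have sum_upper : ∑' k, ∑' j, f (k, k + j + 1) = ∑' p, f (upper p) :=
    (hf.comp_injective upper_inj).tsum_prod.symm
  rw [sum_lower, sum_upper, ← tsum_range f lower_inj, ← tsum_range f upper_inj, range_upper]
  exact ((hf.subtype _).tsum_add_tsum_compl (hf.subtype _)).symm

end Split

theorem summable_of_norm_le_mul_pow_add {E : Type*} [NormedAddCommGroup E] [CompleteSpace E]
    {f : ℕ × ℕ → E} {r C : ℝ} (hr₀ : 0 ≤ r) (hr₁ : r < 1)
    (hf : ∀ p, ‖f p‖ ≤ C * r ^ (p.1 + p.2)) : Summable f := by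
  have hgeom := summable_geometric_of_lt_one hr₀ hr₁
  refine Summable.of_norm_bounded ((hgeom.mul_of_nonneg hgeom (fun _ => by positivity)
    (fun _ => by positivity)).mul_left C) fun p => ?_
  simpa only [pow_add] using hf p

section NormedField
variable {𝕜 : Type*} [NormedField 𝕜]

theorem one_sub_norm_le_norm_one_sub_pow {q : 𝕜} (hq : ‖q‖ ≤ 1) {m : ℕ} (hm : m ≠ 0) :
    1 - ‖q‖ ≤ ‖1 - q ^ m‖ := by
  have := pow_le_of_le_one (norm_nonneg q) hq hm
  calc 1 - ‖q‖ ≤ ‖(1 : 𝕜)‖ - ‖q ^ m‖ := by rw [norm_one, norm_pow]; linarith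
    _ ≤ ‖1 - q ^ m‖ := norm_sub_norm_le _ _

theorem one_sub_norm_le_norm_one_add_pow {q : 𝕜} (hq : ‖q‖ ≤ 1) {m : ℕ} (hm : m ≠ 0) :
    1 - ‖q‖ ≤ ‖1 + q ^ m‖ := by
  have := pow_le_of_le_one (norm_nonneg q) hq hm
  calc 1 - ‖q‖ ≤ ‖(1 : 𝕜)‖ - ‖-q ^ m‖ := by rw [norm_one, norm_neg, norm_pow]; linarith
    _ ≤ ‖1 - -q ^ m‖ := norm_sub_norm_le _ _
    _ = ‖1 + q ^ m‖ := by rw [sub_neg_eq_add]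

theorem norm_pow_div_mul_le {q u v : 𝕜} (hq : ‖q‖ < 1) (hu : 1 - ‖q‖ ≤ ‖u‖)
    (hv : 1 - ‖q‖ ≤ ‖v‖) {a b : ℕ} (hba : b ≤ a) :
    ‖q ^ a / (u * v)‖ ≤ ((1 - ‖q‖) ^ 2)⁻¹ * ‖q‖ ^ b := by
  have hpos : 0 < 1 - ‖q‖ := by linarith
  rw [norm_div, norm_mul, norm_pow, div_eq_inv_mul, sq]
  exact mul_le_mul (by gcongr) (pow_le_pow_of_le_one (norm_nonneg q) hq.le hba) (by positivity)
    (by positivity)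

variable [CompleteSpace 𝕜]

theorem tsum_pow_mul_pow_div_one_sub_pow {q ε : 𝕜} (hq : ‖q‖ < 1) (hε : ‖ε‖ ≤ 1) {M : ℕ}
    (hM : M ≠ 0) :
    ∑' k : ℕ, ε ^ k * q ^ (M * (k + 1)) / (1 - q ^ (2 * k + 1)) =
      ∑' j : ℕ, q ^ (M + j) / (1 - ε * q ^ (M + 2 * j)) := by
  let g : ℕ → ℕ → 𝕜 := fun k j => ε ^ k * q ^ (M * (k + 1) + (2 * k + 1) * j)
  have hg : Summable (Function.uncurry g) := by
    refine summable_of_norm_le_mul_pow_add (C := 1) (norm_nonneg q) hq fun ⟨k, j⟩ => ?_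
    have hexp : k + j ≤ M * (k + 1) + (2 * k + 1) * j := by
      have : 1 ≤ M := Nat.one_le_iff_ne_zero.2 hM
      nlinarith
    simp only [Function.uncurry_apply_pair, g, norm_mul, norm_pow, one_mul]
    exact (mul_le_of_le_one_left (by positivity) (pow_le_one₀ (norm_nonneg ε) hε)).trans
      (pow_le_pow_of_le_one (norm_nonneg q) hq.le hexp)
  have hpow {m : ℕ} (hm : m ≠ 0) : ‖q ^ m‖ < 1 := by
    rw [norm_pow]; exact pow_lt_one₀ (norm_nonneg q) hq hm
  have row (k : ℕ) : ε ^ k * q ^ (M * (k + 1)) / (1 - q ^ (2 * k + 1)) = ∑' j, g k j := by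
    rw [div_eq_mul_inv, ← tsum_geometric_of_norm_lt_one (hpow (by omega)), ← tsum_mul_left]
    congr 1 with j
    ring
  have column (j : ℕ) : q ^ (M + j) / (1 - ε * q ^ (M + 2 * j)) = ∑' k, g k j := by
    have : ‖ε * q ^ (M + 2 * j)‖ < 1 := by
      rw [norm_mul]; exact mul_lt_one_of_nonneg_of_lt_one_right hε (norm_nonneg _) (hpow (by omega))
    rw [div_eq_mul_inv, ← tsum_geometric_of_norm_lt_one this, ← tsum_mul_left]
    congr 1 with k
    ring
  simp only [row, column]
  exact hg.tsum_comm.symm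

end NormedField

noncomputable def zTerm (q : ℂ) (k n : ℕ) : ℂ :=
  q ^ (2 * (k + 1) * (n + 1)) / ((1 + q ^ (2 * n + 1)) * (1 - q ^ (2 * k + 1)))

noncomputable def sTerm (q : ℂ) (k n : ℕ) : ℂ :=
  q ^ ((k + 1) + (n + 1)) / ((1 + q ^ (2 * n + 1)) * (1 - q ^ (2 * (k + 1))))

noncomputable def xTerm (q : ℂ) (k n : ℕ) : ℂ :=
  (-1 : ℂ) ^ (k + 1) * q ^ (2 * (k + 1) * (n + 1) + (k + 1)) /
    ((1 - q ^ (n + 1)) * (1 - q ^ (2 * k + 1)))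

noncomputable def yTerm (q : ℂ) (n m : ℕ) : ℂ :=
  (-1 : ℂ) ^ (m + 1) * q ^ (2 * (n + 1) * (m + 1) + (m + 1)) /
    ((1 - q ^ (2 * m + 1)) * (1 + q ^ (n + 1)))

noncomputable def wTerm (q : ℂ) (k n : ℕ) : ℂ :=
  (-1 : ℂ) ^ (k + 1) * q ^ (2 * (k + 1) * (n + 1) + (k + 1)) /
    ((1 - q ^ (2 * k + 1)) * (1 - q ^ (2 * n + 2)))

section Summands

variable {q : ℂ}

theorem summable_zTerm (hq : ‖q‖ < 1) : Summable (Function.uncurry (zTerm q)) :=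
  summable_of_norm_le_mul_pow_add (norm_nonneg q) hq fun ⟨k, n⟩ =>
    norm_pow_div_mul_le hq (one_sub_norm_le_norm_one_add_pow hq.le (by omega))
      (one_sub_norm_le_norm_one_sub_pow hq.le (by omega)) (by nlinarith)

theorem summable_sTerm (hq : ‖q‖ < 1) : Summable (Function.uncurry (sTerm q)) :=
  summable_of_norm_le_mul_pow_add (norm_nonneg q) hq fun ⟨k, n⟩ =>
    norm_pow_div_mul_le hq (one_sub_norm_le_norm_one_add_pow hq.le (by omega))
      (one_sub_norm_le_norm_one_sub_pow hq.le (by omega)) (by omega)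

theorem summable_wTerm (hq : ‖q‖ < 1) : Summable (Function.uncurry (wTerm q)) :=
  summable_of_norm_le_mul_pow_add (norm_nonneg q) hq fun ⟨k, n⟩ => by
    simp only [Function.uncurry_apply_pair, wTerm, mul_div_assoc, norm_mul, norm_pow, norm_neg,
      norm_one, one_pow, one_mul]
    exact norm_pow_div_mul_le hq (one_sub_norm_le_norm_one_sub_pow hq.le (by omega))
      (one_sub_norm_le_norm_one_sub_pow hq.le (by omega)) (by nlinarith)

theorem summable_xTerm (hq : ‖q‖ < 1) : Summable (Function.uncurry (xTerm q)) :=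
  summable_of_norm_le_mul_pow_add (norm_nonneg q) hq fun ⟨k, n⟩ => by
    simp only [Function.uncurry_apply_pair, xTerm, mul_div_assoc, norm_mul, norm_pow, norm_neg,
      norm_one, one_pow, one_mul]
    exact norm_pow_div_mul_le hq (one_sub_norm_le_norm_one_sub_pow hq.le (by omega))
      (one_sub_norm_le_norm_one_sub_pow hq.le (by omega)) (by nlinarith)

theorem summable_yTerm (hq : ‖q‖ < 1) : Summable (Function.uncurry (yTerm q)) :=
  summable_of_norm_le_mul_pow_add (norm_nonneg q) hq fun ⟨n, m⟩ => by
    simp only [Function.uncurry_apply_pair, yTerm, mul_div_assoc, norm_mul, norm_pow, norm_neg,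
      norm_one, one_pow, one_mul]
    exact norm_pow_div_mul_le hq (one_sub_norm_le_norm_one_sub_pow hq.le (by omega))
      (one_sub_norm_le_norm_one_add_pow hq.le (by omega)) (by nlinarith)

theorem half_xTerm_add_half_yTerm (hq : ‖q‖ < 1) (k n : ℕ) :
    1 / 2 * xTerm q k n + 1 / 2 * yTerm q n k = wTerm q k n := by
  have hpos : 0 < 1 - ‖q‖ := sub_pos.2 hq
  have h₁ : 1 - q ^ (n + 1) ≠ 0 :=
    norm_pos_iff.1 (hpos.trans_le (one_sub_norm_le_norm_one_sub_pow hq.le (by omega)))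
  have h₂ : 1 + q ^ (n + 1) ≠ 0 :=
    norm_pos_iff.1 (hpos.trans_le (one_sub_norm_le_norm_one_add_pow hq.le (by omega)))
  have hsq : 1 - q ^ (2 * n + 2) = (1 - q ^ (n + 1)) * (1 + q ^ (n + 1)) := by ring
  rw [xTerm, yTerm, wTerm, hsq]
  field_simp
  ring

theorem tsum_zTerm_eq (hq : ‖q‖ < 1) (n : ℕ) :
    ∑' k, zTerm q k n = ∑' j, sTerm q (n + j) n := by
  have lambert := tsum_pow_mul_pow_div_one_sub_pow hq (ε := 1) (by simp) (M := 2 * n + 2)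
    (by omega)
  calc ∑' k, zTerm q k n
      = (1 + q ^ (2 * n + 1))⁻¹ *
          ∑' k : ℕ, 1 ^ k * q ^ ((2 * n + 2) * (k + 1)) / (1 - q ^ (2 * k + 1)) := by
        rw [← tsum_mul_left]; congr 1 with k; simp only [zTerm, div_eq_mul_inv, mul_inv]; ring
    _ = ∑' j, sTerm q (n + j) n := by
        rw [lambert, ← tsum_mul_left]; congr 1 with j
        simp only [sTerm, div_eq_mul_inv, mul_inv]; ring

theorem tsum_wTerm_eq (hq : ‖q‖ < 1) (n : ℕ) :
    ∑' k, wTerm q k n = -∑' j, sTerm q n (n + j + 1) := by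
  have lambert := tsum_pow_mul_pow_div_one_sub_pow hq (ε := -1) (by simp) (M := 2 * n + 3)
    (by omega)
  calc ∑' k, wTerm q k n
      = -(1 - q ^ (2 * n + 2))⁻¹ *
          ∑' k : ℕ, (-1) ^ k * q ^ ((2 * n + 3) * (k + 1)) / (1 - q ^ (2 * k + 1)) := by
        rw [← tsum_mul_left]; congr 1 with k; simp only [wTerm, div_eq_mul_inv, mul_inv]; ring
    _ = -∑' j, sTerm q n (n + j + 1) := by
        rw [lambert, ← tsum_mul_left, ← tsum_neg]; congr 1 with j
        simp only [sTerm, div_eq_mul_inv, mul_inv]; ring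

theorem Zser_eq_tsum_sTerm (hq : ‖q‖ < 1) :
    Zser q = ∑' n, ∑' j, sTerm q (n + j) n := by
  calc Zser q = ∑' n, ∑' k, zTerm q k n := (summable_zTerm hq).tsum_comm.symm
    _ = ∑' n, ∑' j, sTerm q (n + j) n := tsum_congr (tsum_zTerm_eq hq)

theorem half_Xser_add_half_Yser (hq : ‖q‖ < 1) :
    1 / 2 * Xser q + 1 / 2 * Yser q = -∑' k, ∑' j, sTerm q k (k + j + 1) := by
  have hX : Xser q = ∑' p : ℕ × ℕ, xTerm q p.2 p.1 :=
    (summable_xTerm hq).tsum_prod.symm.trans ((Equiv.prodComm ℕ ℕ).tsum_eq _).symm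
  have hY : Yser q = ∑' p : ℕ × ℕ, yTerm q p.1 p.2 := (summable_yTerm hq).tsum_prod.symm
  calc 1 / 2 * Xser q + 1 / 2 * Yser q
      = ∑' p : ℕ × ℕ, (1 / 2 * xTerm q p.2 p.1 + 1 / 2 * yTerm q p.1 p.2) := by
        rw [hX, hY, ← tsum_mul_left, ← tsum_mul_left, Summable.tsum_add]
        · exact (summable_xTerm hq).prod_symm.mul_left _
        · exact (summable_yTerm hq).mul_left _
    _ = ∑' n, ∑' k, wTerm q k n := by
        simp only [half_xTerm_add_half_yTerm hq]
        exact (summable_wTerm hq).prod_symm.tsum_prod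
    _ = -∑' k, ∑' j, sTerm q k (k + j + 1) := by
        simp only [tsum_wTerm_eq hq, tsum_neg]

end Summands

theorem stmt5 (q : ℂ) (hq : ‖q‖ < 1) :
    Zser q =
      (∑' k : ℕ, ∑' n : ℕ,
        q ^ ((k + 1) + (n + 1)) / ((1 + q ^ (2 * n + 1)) * (1 - q ^ (2 * (k + 1)))))
      + (1 / 2) * Xser q + (1 / 2) * Yser q := by
  have hS : ∑' k, ∑' n, sTerm q k n =
      ∑' n, ∑' j, sTerm q (n + j) n + ∑' k, ∑' j, sTerm q k (k + j + 1) :=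
    (summable_sTerm hq).tsum_prod.symm.trans
      (summable_sTerm hq).tsum_prod_eq_tsum_tsum_le_add_tsum_tsum_lt
  rw [Zser_eq_tsum_sTerm hq, add_assoc, half_Xser_add_half_Yser hq]
  change _ = ∑' k, ∑' n, sTerm q k n + _
  rw [hS]
  ring
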